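/- Let (b,σ) satisfy the standing assumptions. Fix T>0, K≥0, C₀>0 and γ₂,γ₃>0. For t ∈ [0,T], ε>0 and x,y ∈ ℝ set p := e^{Kt}·(x−y)/ε, T¹_ε := e^{−x}·b(e^{−x}·p, p) − e^{−y}·b(e^{−y}·p, p) and T²_ε := (1+γ₂)·‖σ‖∞²·(e^{Kt−2x}/ε)·(1−e^{x−y})². Then there exist ε₀>0 and a function ω:(0,ε₀]→[0,∞) with ω(ε)→0 as ε→0⁺ such that for all ε ∈ (0,ε₀], t ∈ [0,T] and x,y ∈ ℝ with |x−y| ≤ C₀·√ε: T¹_ε + T²_ε ≤ ((C(ε) − 2δ₂)·e^{−2x} + γ₃)·e^{Kt}·(x−y)²/ε + γ₃·ε, where C(ε) = δ₄²/(4γ₃) + (1+γ₂)·‖σ‖∞² + ω(ε). -/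

import Mathlib

/-!
Write `a = e^{-x}` and `ρ = e^{x-y}`, so that `e^{-y} = a ρ` and `p` has the sign of `x - y`, hence
of `ρ - 1`. Splitting `T¹ = a (b(a p) - b(a ρ p)) + (a - a ρ)(b(a ρ p) - b(0)) + (a - a ρ) b(0)`,
strong monotonicity of `b` in `q` bounds the first two pieces by `-δ₂ a² (ρ² - 1) p`, and Young's
inequality with weight `γ₃ ε e^{-Kt}` together with the growth bound on `b(0, ·)` bounds the last
one by `δ₄²/(4γ₃) · a² (1 - ρ)² e^{Kt}/ε + γ₃ (p (x - y) + ε)`. For `|x - y| ≤ s := C₀ √ε ≤ 1/2`,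
second-order Taylor bounds give `(1 - ρ)² ≤ (1 + 3s)(x - y)²` and `(ρ² - 1) p ≥ (2 - 4s) p (x - y)`,
where `p (x - y) = e^{Kt} (x - y)²/ε`; `T²` is handled by the same bound on `(1 - ρ)²`. All errors
are `O(s)`, so `ω(ε)` is a multiple of `C₀ √ε`.
-/

open Set Real Filter

def StronglyMonotone (δ : ℝ) (f : ℝ → ℝ) : Prop :=
  ∀ q₁ q₂, q₁ ≤ q₂ → δ * (q₂ - q₁) ≤ f q₂ - f q₁

namespace StronglyMonotone

variable {δ : ℝ} {f : ℝ → ℝ}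

theorem mul_sub_le (hf : StronglyMonotone δ f) {c u v : ℝ} (hc : 0 ≤ c * (v - u)) :
    δ * (c * (v - u)) ≤ c * (f v - f u) := by
  rcases le_total u v with huv | hvu
  · obtain rfl | huv := huv.eq_or_lt
    · simp
    have := hf u v huv.le
    nlinarith [nonneg_of_mul_nonneg_left hc (sub_pos.2 huv)]
  · obtain rfl | hvu := hvu.eq_or_lt
    · simp
    have := hf v u hvu.le
    nlinarith [nonpos_of_mul_nonneg_left hc (sub_neg.2 hvu)]

theorem mul_sub_mul_le (hf : StronglyMonotone δ f) {a ρ p : ℝ} (hρ : 0 ≤ ρ)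
    (hρp : 0 ≤ (ρ - 1) * p) :
    a * f (a * p) - a * ρ * f (a * ρ * p) ≤
      -δ * a ^ 2 * ((ρ ^ 2 - 1) * p) + a * (1 - ρ) * f 0 := by
  have h₁ := hf.mul_sub_le (c := a) (u := a * p) (v := a * ρ * p)
    (by linarith [mul_nonneg (sq_nonneg a) hρp])
  have h₂ := hf.mul_sub_le (c := a * ρ - a) (u := 0) (v := a * ρ * p)
    (by linarith [mul_nonneg (mul_nonneg (sq_nonneg a) hρ) hρp])
  linarith

end StronglyMonotone

theorem exp_sub_one_mul_self_nonneg (r : ℝ) : 0 ≤ (exp r - 1) * r := by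
  rcases le_total 0 r with h | h
  · exact mul_nonneg (sub_nonneg.2 (one_le_exp h)) h
  · exact mul_nonneg_of_nonpos_of_nonpos (sub_nonpos.2 (exp_le_one_iff.2 h)) h

theorem sq_exp_sub_one_le {r s : ℝ} (hr : |r| ≤ s) (hs : s ≤ 1) :
    (exp r - 1) ^ 2 ≤ (1 + 3 * s) * r ^ 2 := by
  have h := abs_exp_sub_one_sub_id_le (hr.trans hs)
  have h' : |exp r - 1| ≤ (1 + s) * |r| := by
    calc |exp r - 1| ≤ |exp r - 1 - r| + |r| := by simpa using abs_add_le (exp r - 1 - r) r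
      _ ≤ |r| ^ 2 + |r| := by rw [sq_abs]; linarith
      _ ≤ (1 + s) * |r| := by nlinarith [abs_nonneg r]
  calc (exp r - 1) ^ 2 = |exp r - 1| ^ 2 := (sq_abs _).symm
    _ ≤ ((1 + s) * |r|) ^ 2 := pow_le_pow_left₀ (abs_nonneg _) h' 2
    _ ≤ (1 + 3 * s) * r ^ 2 := by
      rw [mul_pow, sq_abs]
      have hs0 : 0 ≤ s := (abs_nonneg r).trans hr
      nlinarith [mul_nonneg (mul_nonneg hs0 (sub_nonneg.2 hs)) (sq_nonneg r)]

theorem mul_sq_le_mul_exp_sq_sub_one {r s : ℝ} (hr : |r| ≤ s) (hs : s ≤ 1 / 2) :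
    (2 - 4 * s) * r ^ 2 ≤ r * (exp r ^ 2 - 1) := by
  have h := abs_le.1 (abs_exp_sub_one_sub_id_le (x := 2 * r) (by rw [abs_mul, abs_two]; linarith))
  rw [two_mul, exp_add, ← sq] at h
  rcases le_total 0 r with hr0 | hr0
  · rw [abs_of_nonneg hr0] at hr
    nlinarith
  · rw [abs_of_nonpos hr0] at hr
    nlinarith

theorem mul_le_of_abs_le_mul_sqrt {β c δ γ μ p : ℝ} (hγ : 0 < γ) (hμ : 0 < μ)
    (hβ : |β| ≤ δ * √(1 + p ^ 2)) :
    c * β ≤ δ ^ 2 / (4 * γ) * c ^ 2 / μ + γ * μ * (1 + p ^ 2) := by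
  have hγμ : 0 < γ * μ := mul_pos hγ hμ
  have young := two_mul_le_add_mul_sq (a := |c| * δ / 2) (b := √(1 + p ^ 2)) (inv_pos.2 hγμ)
  rw [inv_inv, sq_sqrt (by positivity), div_pow, mul_pow, sq_abs] at young
  calc c * β ≤ |c| * |β| := by rw [← abs_mul]; exact le_abs_self _
    _ ≤ |c| * (δ * √(1 + p ^ 2)) := mul_le_mul_of_nonneg_left hβ (abs_nonneg c)
    _ ≤ (γ * μ)⁻¹ * (c ^ 2 * δ ^ 2 / 2 ^ 2) + γ * μ * (1 + p ^ 2) := by linarith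
    _ = δ ^ 2 / (4 * γ) * c ^ 2 / μ + γ * μ * (1 + p ^ 2) := by field_simp; ring

theorem T_eps_le {b : ℝ → ℝ} {δ₂ δ₄ γ₃ Λ ε s E x y p : ℝ} (hb : StronglyMonotone δ₂ b)
    (hb₀ : |b 0| ≤ δ₄ * √(1 + p ^ 2)) (hδ₂ : 0 ≤ δ₂) (hγ₃ : 0 < γ₃) (hΛ : 0 ≤ Λ)
    (hε : 0 < ε) (hE : 1 ≤ E) (hxy : |x - y| ≤ s) (hs : s ≤ 1 / 2) (hp : p = E * (x - y) / ε) :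
    exp (-x) * b (exp (-x) * p) - exp (-y) * b (exp (-y) * p) +
        Λ * (E * exp (-2 * x) / ε) * (1 - exp (x - y)) ^ 2 ≤
      ((δ₄ ^ 2 / (4 * γ₃) + Λ + (4 * δ₂ + 3 * (δ₄ ^ 2 / (4 * γ₃)) + 3 * Λ) * s - 2 * δ₂) *
          exp (-2 * x) + γ₃) * E * (x - y) ^ 2 / ε + γ₃ * ε := by
  have hy : exp (-y) = exp (-x) * exp (x - y) := by rw [← exp_add]; ring_nf
  have h2x : exp (-2 * x) = exp (-x) ^ 2 := by rw [← exp_nat_mul]; ring_nf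
  rw [hy, h2x]
  set a := exp (-x)
  set r := x - y
  set ρ := exp r
  have hE₀ : 0 < E := by linarith
  have hD : 0 < E / ε := by positivity
  have hpD : p = E / ε * r := by rw [hp]; ring
  have hT₁ := hb.mul_sub_mul_le (a := a) (ρ := ρ) (p := p) (exp_pos r).le
    (by rw [hpD, mul_left_comm]; exact mul_nonneg hD.le (exp_sub_one_mul_self_nonneg r))
  have hρ₂ : (2 - 4 * s) * (p * r) ≤ (ρ ^ 2 - 1) * p := by
    have := mul_le_mul_of_nonneg_left (mul_sq_le_mul_exp_sq_sub_one hxy hs) hD.le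
    rw [hpD]; linarith
  have hρ : (1 - ρ) ^ 2 ≤ (1 + 3 * s) * r ^ 2 := by
    rw [← neg_sub, neg_sq]; exact sq_exp_sub_one_le hxy (by linarith)
  have hyoung := mul_le_of_abs_le_mul_sqrt (c := a * (1 - ρ)) (μ := ε / E) hγ₃ (by positivity) hb₀
  rw [mul_div_assoc] at hyoung
  have hsq : (a * (1 - ρ)) ^ 2 / (ε / E) ≤ (1 + 3 * s) * a ^ 2 * (p * r) := by
    calc (a * (1 - ρ)) ^ 2 / (ε / E) = a ^ 2 * (E / ε) * (1 - ρ) ^ 2 := by field_simp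
      _ ≤ a ^ 2 * (E / ε) * ((1 + 3 * s) * r ^ 2) := by gcongr
      _ = (1 + 3 * s) * a ^ 2 * (p * r) := by rw [hpD]; ring
  have hlin : γ₃ * (ε / E) * (1 + p ^ 2) ≤ γ₃ * ε + γ₃ * (p * r) := by
    calc γ₃ * (ε / E) * (1 + p ^ 2) = γ₃ * (ε / E) + γ₃ * (p * r) := by rw [hpD]; field_simp
      _ ≤ γ₃ * ε + γ₃ * (p * r) := by gcongr; exact div_le_self hε.le hE
  have hT₂ : Λ * (E * a ^ 2 / ε) * (1 - ρ) ^ 2 = Λ * ((a * (1 - ρ)) ^ 2 / (ε / E)) := by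
    field_simp
  have hRHS : ∀ c : ℝ, c * E * r ^ 2 / ε = c * (p * r) := fun c ↦ by rw [hpD]; field_simp
  rw [hT₂, hRHS]
  linarith [mul_le_mul_of_nonneg_left hρ₂ (mul_nonneg hδ₂ (sq_nonneg a)),
    mul_le_mul_of_nonneg_left hsq (by positivity : 0 ≤ δ₄ ^ 2 / (4 * γ₃)),
    mul_le_mul_of_nonneg_left hsq hΛ]

theorem estimate_T_eps (b : ℝ → ℝ → ℝ)
    (δ2 δ4 : ℝ) (hδ2 : 0 < δ2)
    (S : ℝ)
    (hb2 : ∀ p q1 q2 : ℝ, q1 ≤ q2 → δ2 * (q2 - q1) ≤ b q2 p - b q1 p)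
    (hb4 : ∀ p : ℝ, |b 0 p| ≤ δ4 * Real.sqrt (1 + p ^ 2))
    (T K C0 γ2 γ3 : ℝ) (hK : 0 ≤ K) (hC0 : 0 < C0)
    (hγ2 : 0 < γ2) (hγ3 : 0 < γ3) :
    ∃ ε0 : ℝ, 0 < ε0 ∧ ∃ ω : ℝ → ℝ,
      (∀ ε : ℝ, 0 < ε → ε ≤ ε0 → 0 ≤ ω ε) ∧
      Filter.Tendsto ω (nhdsWithin 0 (Set.Ioi 0)) (nhds 0) ∧
      ∀ ε t x y : ℝ, 0 < ε → ε ≤ ε0 → 0 ≤ t → t ≤ T →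
        |x - y| ≤ C0 * Real.sqrt ε →
        ∀ p : ℝ, p = Real.exp (K * t) * (x - y) / ε →
          Real.exp (-x) * b (Real.exp (-x) * p) p - Real.exp (-y) * b (Real.exp (-y) * p) p +
              (1 + γ2) * S ^ 2 * (Real.exp (K * t - 2 * x) / ε) *
                (1 - Real.exp (x - y)) ^ 2 ≤
            ((δ4 ^ 2 / (4 * γ3) + (1 + γ2) * S ^ 2 + ω ε - 2 * δ2) * Real.exp (-2 * x) + γ3) *
                Real.exp (K * t) * (x - y) ^ 2 / ε +
              γ3 * ε := by
  have hΛ : 0 ≤ (1 + γ2) * S ^ 2 := by positivity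
  set M := 4 * δ2 + 3 * (δ4 ^ 2 / (4 * γ3)) + 3 * ((1 + γ2) * S ^ 2)
  have hM : 0 ≤ M := by positivity
  refine ⟨(2 * C0)⁻¹ ^ 2, by positivity, fun ε ↦ M * (C0 * √ε), fun ε _ _ ↦ by positivity, ?_, ?_⟩
  · have hcont : Continuous fun ε : ℝ ↦ M * (C0 * √ε) := by fun_prop
    simpa using (hcont.tendsto 0).mono_left nhdsWithin_le_nhds
  intro ε t x y hε hεε₀ ht _ hxy p hp
  have hs : C0 * √ε ≤ 1 / 2 := by
    have : √ε ≤ (2 * C0)⁻¹ := (sqrt_le_left (by positivity)).2 hεε₀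
    calc C0 * √ε ≤ C0 * (2 * C0)⁻¹ := by gcongr
      _ = 1 / 2 := by field_simp
  rw [show K * t - 2 * x = K * t + -2 * x by ring, exp_add]
  exact T_eps_le (fun q₁ q₂ h ↦ hb2 p q₁ q₂ h) (hb4 p) hδ2.le hγ3 hΛ hε
    (one_le_exp (mul_nonneg hK ht)) hxy hs hp
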